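/- arXiv:1702.05196 — 5 statements merged into one kernel-verified Lean document; each statement's English description precedes it below -/
import Mathlib

section
/- (Abstract form of Theorem 3.2, error representation for the nonlinear PBE.) Let n : V → V* be a map into continuous linear functionals (the nonlinear term) and let ā : V × V → ℝ be a continuous bilinear form (the linearization). Suppose: (primal problem) u^h ∈ V_m satisfies u^h − u^h_d ∈ V_{m,0} and a_m(u^h, w) = 0 for all w ∈ V_{m,0}, and u^r ∈ V satisfies u^r − u^r_d ∈ V_0 and a(u^r, v) + n(u^r)(v) + c(u^h, v) = ℓ(v) for all v ∈ V_0; (linearization identity) n(u^r)(v) − n(U^r)(v) = ā(u^r − U^r, v) for all v ∈ V; (adjoint problem) φ^r ∈ V_0 satisfies a(v, φ^r) + ā(v, φ^r) = ψ(v) for all v ∈ V_0, and φ^h ∈ V_{m,0} satisfies a_m(w, φ^h) + c(w, φ^r) = ψ_m(w) for all w ∈ V_{m,0}; (discrete solutions) U^h, U^h_d ∈ V_m with U^h − U^h_d ∈ V_{m,0}, and U^r, U^r_d ∈ V with U^r − U^r_d ∈ V_0. Then ψ_m(u^h − U^h) + ψ(u^r − U^r) = E^r + E^m + E^Γ + E^{∂Ω}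 + E^{neg}, where E^r = ℓ(φ^r) − a(U^r, φ^r) − n(U^r)(φ^r) − c(U^h, φ^r), E^m = −a_m(U^h, φ^h), E^Γ = a_m(U^h_d − u^h_d, φ^h) + c(U^h_d − u^h_d, φ^r), E^{∂Ω} = a(U^r_d − u^r_d, φ^r) + ā(U^r_d − u^r_d, φ^r), and E^{neg} = ψ_m(u^h_d − U^h_d) + ψ(u^r_d − U^r_d). -/
/-- Abstract form of Theorem 3.2: error representation for the nonlinear PBE. -/
theorem error_representation_nonlinear_PBE
    {Vm V : Type*}
    [NormedAddCommGroup Vm] [InnerProductSpace ℝ Vm] [CompleteSpace Vm]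
    [NormedAddCommGroup V] [InnerProductSpace ℝ V] [CompleteSpace V]
    (Vm0 : Submodule ℝ Vm) (hVm0 : IsClosed (Vm0 : Set Vm))
    (V0 : Submodule ℝ V) (hV0 : IsClosed (V0 : Set V))
    (am : Vm →L[ℝ] Vm →L[ℝ] ℝ) (a : V →L[ℝ] V →L[ℝ] ℝ) (c : Vm →L[ℝ] V →L[ℝ] ℝ)
    (l : V →L[ℝ] ℝ) (ψm : Vm →L[ℝ] ℝ) (ψ : V →L[ℝ] ℝ)
    -- the nonlinear term and its linearization
    (n : V → (V →L[ℝ] ℝ)) (abar : V →L[ℝ] V →L[ℝ] ℝ)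
    -- primal problem
    (uh uhd : Vm) (huh_bc : uh - uhd ∈ Vm0)
    (huh : ∀ w ∈ Vm0, am uh w = 0)
    (ur urd : V) (hur_bc : ur - urd ∈ V0)
    (hur : ∀ v ∈ V0, a ur v + n ur v + c uh v = l v)
    -- discrete solutions
    (Uh Uhd : Vm) (hUh_bc : Uh - Uhd ∈ Vm0)
    (Ur Urd : V) (hUr_bc : Ur - Urd ∈ V0)
    -- linearization identity (mean value theorem)
    (hlin : ∀ v : V, n ur v - n Ur v = abar (ur - Ur) v)
    -- adjoint problem
    (φr : V) (hφr_mem : φr ∈ V0)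
    (hφr : ∀ v ∈ V0, a v φr + abar v φr = ψ v)
    (φh : Vm) (hφh_mem : φh ∈ Vm0)
    (hφh : ∀ w ∈ Vm0, am w φh + c w φr = ψm w) :
    ψm (uh - Uh) + ψ (ur - Ur) =
      (l φr - a Ur φr - n Ur φr - c Uh φr)             -- E^r
      + (-(am Uh φh))                                   -- E^m
      + (am (Uhd - uhd) φh + c (Uhd - uhd) φr)          -- E^Γ
      + (a (Urd - urd) φr + abar (Urd - urd) φr)        -- E^{∂Ω}
      + (ψm (uhd - Uhd) + ψ (urd - Urd)) := by         -- E^{neg}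
  have h1 := hφh ((uh - uhd) - (Uh - Uhd)) (Vm0.sub_mem huh_bc hUh_bc)
  have h2 := hφr ((ur - urd) - (Ur - Urd)) (V0.sub_mem hur_bc hUr_bc)
  have h3 := huh φh hφh_mem
  have h4 := hur φr hφr_mem
  have h5 := hlin φr
  simp only [map_sub, ContinuousLinearMap.sub_apply] at *
  linarith
end

section
/- (Galerkin-orthogonality form of the error representation, used for the classical refinement indicator.) Assume all hypotheses and notation of the abstract Theorem 3.1 (linearized case). In addition, let W_h ⊆ V_{m,0} and W ⊆ V_0 be subspaces such that the discrete Galerkin equations hold: a_m(U^h, w) = 0 for all w ∈ W_h, and a(U^r, v) + c(U^h, v) = ℓ(v) for all v ∈ W. Then for any π_m φ^h ∈ W_h and any π φ^r ∈ W, the error in the quantity of interest satisfies ψ_m(u^h − U^h) + ψ(u^r − U^r) = ℓ(φ^r − πφ^r) − a(U^r, φ^r − πφ^r) − c(U^h, φ^r − πφ^r) − a_m(U^h, φ^h − π_m φ^h) + a(U^r_d − u^r_d, φ^r) + a_m(U^h_d − u^h_d, φ^h) + c(U^h_d − u^h_d, φ^r) + ψ_m(u^h_d − U^h_d) + ψ(u^r_d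 − U^r_d). -/
/-- Galerkin-orthogonality form of the error representation for the linearized PBE,
used for the classical refinement indicator. -/
theorem error_representation_galerkin_orthogonality
    {Vm V : Type*}
    [NormedAddCommGroup Vm] [InnerProductSpace ℝ Vm] [CompleteSpace Vm]
    [NormedAddCommGroup V] [InnerProductSpace ℝ V] [CompleteSpace V]
    (Vm0 : Submodule ℝ Vm) (hVm0 : IsClosed (Vm0 : Set Vm))
    (V0 : Submodule ℝ V) (hV0 : IsClosed (V0 : Set V))
    (am : Vm →L[ℝ] Vm →L[ℝ] ℝ) (a : V →L[ℝ] V →L[ℝ] ℝ) (c : Vm →L[ℝ] V →L[ℝ] ℝ)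
    (l : V →L[ℝ] ℝ) (ψm : Vm →L[ℝ] ℝ) (ψ : V →L[ℝ] ℝ)
    -- primal problem
    (uh uhd : Vm) (huh_bc : uh - uhd ∈ Vm0)
    (huh : ∀ w ∈ Vm0, am uh w = 0)
    (ur urd : V) (hur_bc : ur - urd ∈ V0)
    (hur : ∀ v ∈ V0, a ur v + c uh v = l v)
    -- adjoint problem
    (φr : V) (hφr_mem : φr ∈ V0)
    (hφr : ∀ v ∈ V0, a v φr = ψ v)
    (φh : Vm) (hφh_mem : φh ∈ Vm0)
    (hφh : ∀ w ∈ Vm0, am w φh + c w φr = ψm w)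
    -- discrete solutions
    (Uh Uhd : Vm) (hUh_bc : Uh - Uhd ∈ Vm0)
    (Ur Urd : V) (hUr_bc : Ur - Urd ∈ V0)
    -- finite element subspaces and discrete Galerkin equations
    (Wh : Submodule ℝ Vm) (hWh : Wh ≤ Vm0)
    (W : Submodule ℝ V) (hW : W ≤ V0)
    (hUh_galerkin : ∀ w ∈ Wh, am Uh w = 0)
    (hUr_galerkin : ∀ v ∈ W, a Ur v + c Uh v = l v)
    -- projections of the adjoint solutions
    (πmφh : Vm) (hπmφh : πmφh ∈ Wh)
    (πφr : V) (hπφr : πφr ∈ W) :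
    ψm (uh - Uh) + ψ (ur - Ur) =
      l (φr - πφr) - a Ur (φr - πφr) - c Uh (φr - πφr)
      - am Uh (φh - πmφh)
      + a (Urd - urd) φr
      + am (Uhd - uhd) φh + c (Uhd - uhd) φr
      + ψm (uhd - Uhd) + ψ (urd - Urd) := by
  have h1 := hφh ((uh-uhd)-(Uh-Uhd)) (Vm0.sub_mem huh_bc hUh_bc)
  have h2 := hφr ((ur-urd)-(Ur-Urd)) (V0.sub_mem hur_bc hUr_bc)
  have h3 := huh φh hφh_mem
  have h4 := hur φr hφr_mem
  have h5 := hUh_galerkin πmφh hπmφh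
  have h6 := hUr_galerkin πφr hπφr
  simp only [map_sub, ContinuousLinearMap.sub_apply] at *
  linarith
end

section
/- (Single-field variational error representation with inhomogeneous boundary data.) Let V be a real Hilbert space, V_0 ⊆ V a closed subspace, a : V × V → ℝ a continuous bilinear form, and ℓ, ψ : V → ℝ continuous linear functionals. Suppose u, u_d ∈ V with u − u_d ∈ V_0 and a(u, v) = ℓ(v) for all v ∈ V_0; suppose φ ∈ V_0 satisfies a(v, φ) = ψ(v) for all v ∈ V_0; and let U, U_d ∈ V with U − U_d ∈ V_0. Then ψ(u − U) = [ℓ(φ) − a(U, φ)] + a(U_d − u_d, φ) + ψ(u_d − U_d). -/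
/-- Single-field variational error representation with inhomogeneous boundary data. -/
theorem single_field_error_representation
    {V : Type*} [NormedAddCommGroup V] [InnerProductSpace ℝ V] [CompleteSpace V]
    (V0 : Submodule ℝ V) (hV0 : IsClosed (V0 : Set V))
    (a : V →L[ℝ] V →L[ℝ] ℝ) (l ψ : V →L[ℝ] ℝ)
    (u ud : V) (hu_bc : u - ud ∈ V0)
    (hu : ∀ v ∈ V0, a u v = l v)
    (φ : V) (hφ_mem : φ ∈ V0)
    (hφ : ∀ v ∈ V0, a v φ = ψ v)
    (U Ud : V) (hU_bc : U - Ud ∈ V0) :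
    ψ (u - U) = (l φ - a U φ) + a (Ud - ud) φ + ψ (ud - Ud) := by
  have hmem : (u - ud) - (U - Ud) ∈ V0 := V0.sub_mem hu_bc hU_bc
  have h1 := hφ _ hmem
  have h2 := hu φ hφ_mem
  simp only [map_sub, ContinuousLinearMap.sub_apply] at h1 h2 ⊢
  linarith
end

section
/- (The Helmholtz Green's function kernel satisfies the modified Helmholtz equation away from its singularity.) Let E = EuclideanSpace ℝ (Fin 3), let a ∈ E, and let k ≥ 0 be a real number. Define w : E → ℝ by w(y) = exp(−k‖y − a‖)/‖y − a‖. Then for every x ∈ E with x ≠ a, w is twice continuously differentiable in a neighborhood of x and ∑_{i=1}^{3} ∂²w/∂y_i²(x) = k² · w(x). -/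
/-!
Write the kernel as `w y = G (‖y - a‖ ^ 2)` with `G s = exp (-k √s) / √s`, which is smooth
on `s > 0`. Differentiating twice along a unit vector `v` gives
`∂ᵥ∂ᵥ w = 2 G'(s) + 4 G''(s) ⟪y - a, v⟫²`, so summing over an orthonormal basis of an
`n`-dimensional space yields `Δ w = 2 n G'(s) + 4 s G''(s)`. For `n = 3` this equals
`k² G(s)`, a one-variable identity that is checked in the variable `r = √s`.
-/

open Real Filter Topology InnerProductSpace

section RadialLaplacian

variable {E : Type*} [NormedAddCommGroup E] [InnerProductSpace ℝ E] {G : ℝ → ℝ} {a : E}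

theorem HasDerivAt.hasFDerivAt_comp_norm_sub_sq {y : E} {G' : ℝ}
    (hG : HasDerivAt G G' (‖y - a‖ ^ 2)) :
    HasFDerivAt (fun z => G (‖z - a‖ ^ 2)) ((2 * G') • innerSL ℝ (y - a)) y := by
  refine (hG.comp_hasFDerivAt y ((hasFDerivAt_id y).sub_const a).norm_sq).congr_fderiv ?_
  ext v
  simp only [id_eq, ContinuousLinearMap.comp_id, smul_apply,
    coe_innerSL_apply, nsmul_eq_mul, Nat.cast_ofNat, smul_eq_mul]
  ring

theorem hasFDerivAt_inner_sub_const (a v x : E) :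
    HasFDerivAt (fun y => ⟪y - a, v⟫_ℝ) (innerSL ℝ v) x := by
  have hlin : (fun y => ⟪y - a, v⟫_ℝ) = fun y => innerSL ℝ v y - ⟪v, a⟫_ℝ := by
    ext y
    simp [inner_sub_left, real_inner_comm]
  exact hlin ▸ (innerSL ℝ v).hasFDerivAt.sub_const _

theorem fderiv_fderiv_comp_norm_sub_sq_apply {G' : ℝ → ℝ} {x : E} {G'' : ℝ}
    (hG : ∀ᶠ s in 𝓝 (‖x - a‖ ^ 2), HasDerivAt G (G' s) s)
    (hG' : HasDerivAt G' G'' (‖x - a‖ ^ 2)) (v : E) :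
    fderiv ℝ (fun y => fderiv ℝ (fun z => G (‖z - a‖ ^ 2)) y v) x v
      = 2 * G' (‖x - a‖ ^ 2) * ‖v‖ ^ 2 + 4 * G'' * ⟪x - a, v⟫_ℝ ^ 2 := by
  have hcont : Continuous fun y : E => ‖y - a‖ ^ 2 := by fun_prop
  have hfirst : (fun y => fderiv ℝ (fun z => G (‖z - a‖ ^ 2)) y v)
      =ᶠ[𝓝 x] fun y => 2 * G' (‖y - a‖ ^ 2) * ⟪y - a, v⟫_ℝ :=
    (hcont.continuousAt.eventually hG).mono fun y hy => by
      simp only [hy.hasFDerivAt_comp_norm_sub_sq.fderiv]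
      rfl
  rw [hfirst.fderiv_eq, ((hG'.const_mul 2).hasFDerivAt_comp_norm_sub_sq.fun_mul
    (hasFDerivAt_inner_sub_const a v x)).fderiv]
  simp only [inner_sub_left, add_apply, smul_apply,
    coe_innerSL_apply, real_inner_self_eq_norm_sq, smul_eq_mul]
  ring

theorem sum_fderiv_fderiv_comp_norm_sub_sq {ι : Type*} [Fintype ι] (b : OrthonormalBasis ι ℝ E)
    {G' : ℝ → ℝ} {x : E} {G'' : ℝ}
    (hG : ∀ᶠ s in 𝓝 (‖x - a‖ ^ 2), HasDerivAt G (G' s) s)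
    (hG' : HasDerivAt G' G'' (‖x - a‖ ^ 2)) :
    ∑ i, fderiv ℝ (fun y => fderiv ℝ (fun z => G (‖z - a‖ ^ 2)) y (b i)) x (b i)
      = 2 * Fintype.card ι * G' (‖x - a‖ ^ 2) + 4 * ‖x - a‖ ^ 2 * G'' := by
  have hsq : ∑ i, ⟪x - a, b i⟫_ℝ ^ 2 = ‖x - a‖ ^ 2 := by
    rw [← real_inner_self_eq_norm_sq, ← b.sum_inner_mul_inner]
    simp_rw [sq, real_inner_comm (b _) (x - a)]
  simp only [fderiv_fderiv_comp_norm_sub_sq_apply hG hG', b.norm_eq_one, Finset.sum_add_distrib,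
    ← Finset.mul_sum, hsq, one_pow, mul_one, Finset.sum_const, Finset.card_univ, nsmul_eq_mul]
  ring

end RadialLaplacian

section HelmholtzProfile

noncomputable def helmholtzRadial (k r : ℝ) : ℝ := exp (-k * r) / r

/- `helmholtzSqDeriv k r` and `helmholtzSqDeriv2 k r` are the first and second derivatives of
`s ↦ helmholtzRadial k √s` at `s = r ^ 2`. -/
noncomputable def helmholtzSqDeriv (k r : ℝ) : ℝ := -(exp (-k * r) * (k * r + 1)) / (2 * r ^ 3)

noncomputable def helmholtzSqDeriv2 (k r : ℝ) : ℝ :=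
  exp (-k * r) * (k ^ 2 * r ^ 2 + 3 * k * r + 3) / (4 * r ^ 5)

variable {k r s : ℝ}

theorem hasDerivAt_exp_neg_mul (k r : ℝ) :
    HasDerivAt (fun r => exp (-k * r)) (-k * exp (-k * r)) r := by
  simpa [mul_comm] using ((hasDerivAt_id r).const_mul (-k)).exp

theorem hasDerivAt_helmholtzRadial (hr : r ≠ 0) :
    HasDerivAt (helmholtzRadial k) (-(exp (-k * r) * (k * r + 1)) / r ^ 2) r := by
  refine ((hasDerivAt_exp_neg_mul k r).div (hasDerivAt_id' r) hr).congr_deriv ?_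
  field_simp
  ring

theorem hasDerivAt_helmholtzSqDeriv (hr : r ≠ 0) :
    HasDerivAt (helmholtzSqDeriv k)
      (exp (-k * r) * (k ^ 2 * r ^ 2 + 3 * k * r + 3) / (2 * r ^ 4)) r := by
  have hnum :=
    ((hasDerivAt_exp_neg_mul k r).fun_mul (((hasDerivAt_id' r).const_mul k).add_const 1)).fun_neg
  have hden := (hasDerivAt_pow 3 r).const_mul 2
  refine (hnum.div hden (by positivity)).congr_deriv ?_
  field_simp
  ring

theorem hasDerivAt_helmholtzRadial_sqrt (hs : 0 < s) :
    HasDerivAt (fun s => helmholtzRadial k √s) (helmholtzSqDeriv k √s) s := by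
  have hr : √s ≠ 0 := (sqrt_pos.mpr hs).ne'
  refine ((hasDerivAt_helmholtzRadial hr).comp s (hasDerivAt_sqrt hs.ne')).congr_deriv ?_
  unfold helmholtzSqDeriv
  field_simp

theorem hasDerivAt_helmholtzSqDeriv_sqrt (hs : 0 < s) :
    HasDerivAt (fun s => helmholtzSqDeriv k √s) (helmholtzSqDeriv2 k √s) s := by
  have hr : √s ≠ 0 := (sqrt_pos.mpr hs).ne'
  refine ((hasDerivAt_helmholtzSqDeriv hr).comp s (hasDerivAt_sqrt hs.ne')).congr_deriv ?_
  unfold helmholtzSqDeriv2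
  field_simp
  ring

theorem contDiffAt_helmholtzRadial_sqrt {n : WithTop ℕ∞} (hs : 0 < s) :
    ContDiffAt ℝ n (fun s => helmholtzRadial k √s) s := by
  have hsqrt : ContDiffAt ℝ n (√·) s := contDiffAt_sqrt hs.ne'
  exact ((contDiffAt_const.mul hsqrt).exp).div hsqrt (sqrt_pos.mpr hs).ne'

theorem helmholtzSqDeriv_radial_identity (hr : r ≠ 0) :
    2 * 3 * helmholtzSqDeriv k r + 4 * r ^ 2 * helmholtzSqDeriv2 k r
      = k ^ 2 * helmholtzRadial k r := by
  unfold helmholtzSqDeriv helmholtzSqDeriv2 helmholtzRadial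
  field_simp
  ring

end HelmholtzProfile

theorem helmholtz_kernel_modified_helmholtz_general
    (a x : EuclideanSpace ℝ (Fin 3)) (k : ℝ) (hx : x ≠ a) :
    ContDiffAt ℝ 2
      (fun y : EuclideanSpace ℝ (Fin 3) => Real.exp (-k * ‖y - a‖) / ‖y - a‖) x ∧
    ∑ i : Fin 3,
      fderiv ℝ
        (fun y : EuclideanSpace ℝ (Fin 3) =>
          fderiv ℝ
            (fun z : EuclideanSpace ℝ (Fin 3) => Real.exp (-k * ‖z - a‖) / ‖z - a‖) y
            (EuclideanSpace.single i (1 : ℝ)))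
        x (EuclideanSpace.single i (1 : ℝ))
      = k ^ 2 * (Real.exp (-k * ‖x - a‖) / ‖x - a‖) := by
  have hr : 0 < ‖x - a‖ := norm_pos_iff.mpr (sub_ne_zero.mpr hx)
  have hs : 0 < ‖x - a‖ ^ 2 := by positivity
  have hw : (fun y : EuclideanSpace ℝ (Fin 3) => exp (-k * ‖y - a‖) / ‖y - a‖)
      = fun y => helmholtzRadial k √(‖y - a‖ ^ 2) := by
    simp [helmholtzRadial, sqrt_sq (norm_nonneg _)]
  rw [hw]
  refine ⟨(contDiffAt_helmholtzRadial_sqrt hs).comp x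
    ((contDiff_id.sub contDiff_const).norm_sq ℝ).contDiffAt, ?_⟩
  simp_rw [← EuclideanSpace.basisFun_apply]
  rw [sum_fderiv_fderiv_comp_norm_sub_sq _
    ((eventually_gt_nhds hs).mono fun s hs => hasDerivAt_helmholtzRadial_sqrt hs)
    (hasDerivAt_helmholtzSqDeriv_sqrt hs)]
  simp only [sqrt_sq hr.le, Fintype.card_fin]
  exact_mod_cast helmholtzSqDeriv_radial_identity hr.ne'

/-- The Helmholtz Green's function kernel `w (y) = exp (-k * ‖y - a‖) / ‖y - a‖` satisfies
the modified Helmholtz equation `Δ w = k² w` away from its singularity. -/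
theorem helmholtz_kernel_modified_helmholtz
    (a x : EuclideanSpace ℝ (Fin 3)) (k : ℝ) (hk : 0 ≤ k) (hx : x ≠ a) :
    ContDiffAt ℝ 2
      (fun y : EuclideanSpace ℝ (Fin 3) => Real.exp (-k * ‖y - a‖) / ‖y - a‖) x ∧
    ∑ i : Fin 3,
      fderiv ℝ
        (fun y : EuclideanSpace ℝ (Fin 3) =>
          fderiv ℝ
            (fun z : EuclideanSpace ℝ (Fin 3) => Real.exp (-k * ‖z - a‖) / ‖z - a‖) y
            (EuclideanSpace.single i (1 : ℝ)))
        x (EuclideanSpace.single i (1 : ℝ))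
      = k ^ 2 * (Real.exp (-k * ‖x - a‖) / ‖x - a‖) :=
  helmholtz_kernel_modified_helmholtz_general a x k hx
end

section
/- (The boundary function g solves the linearized PBE in the solvent away from the charges.) Let E = EuclideanSpace ℝ (Fin 3), let x₁, …, x_m ∈ E, Q₁, …, Q_m ∈ ℝ, and let ε_s > 0, κ̄_s ≥ 0 and α > 0 be real constants. Define g : E → ℝ by g(y) = α ∑_{i=1}^{m} (Q_i/(ε_s ‖y − x_i‖)) · exp(−κ̄_s ‖y − x_i‖ / √ε_s). Then for every x ∈ E with x ≠ x_i for all i, g is twice continuously differentiable in a neighborhood of x and −ε_s · ∑_{j=1}^{3} ∂²g/∂y_j²(x) + κ̄_s² · g(x) = 0. -/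
/-!
Each summand of `g` is a multiple of a translate of the Yukawa potential `e^{-c‖y‖}/‖y‖` with
`c = κ̄_s / √ε_s`. Written as `ψ(‖y‖²)`, a radial function has Laplacian `4tψ''(t) + 2nψ'(t)` at
`t = ‖y‖²` in dimension `n`, and for `n = 3` the Yukawa profile solves `4tψ'' + 6ψ' = c²ψ`. Hence
each summand, and by linearity `g`, satisfies `Δg = c²g` away from the charges, and
`ε_s c² = κ̄_s²`.
-/

open Laplacian InnerProductSpace Filter Topology
open scoped RealInnerProductSpace

theorem hasFDerivAt_norm_sub_sq {E : Type*} [NormedAddCommGroup E] [InnerProductSpace ℝ E]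
    (a y : E) : HasFDerivAt (fun z : E => ‖z - a‖ ^ 2) (2 • innerSL ℝ (y - a)) y := by
  simpa using ((hasFDerivAt_id y).sub_const a).norm_sq

theorem laplacian_comp_norm_sub_sq {E : Type*} [NormedAddCommGroup E] [InnerProductSpace ℝ E]
    [FiniteDimensional ℝ E] {φ φ' : ℝ → ℝ} {φ'' : ℝ} {a x : E}
    (hφ : ∀ᶠ t in 𝓝 (‖x - a‖ ^ 2), HasDerivAt φ (φ' t) t)
    (hφ' : HasDerivAt φ' φ'' (‖x - a‖ ^ 2)) :
    Δ (fun y => φ (‖y - a‖ ^ 2)) x =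
      4 * ‖x - a‖ ^ 2 * φ'' + 2 * Module.finrank ℝ E * φ' (‖x - a‖ ^ 2) := by
  set L : E →L[ℝ] E →L[ℝ] ℝ := 2 • innerSL ℝ
  have hq : ∀ y, HasFDerivAt (fun z : E => ‖z - a‖ ^ 2) (L (y - a)) y := hasFDerivAt_norm_sub_sq a
  have hDf : fderiv ℝ (fun y => φ (‖y - a‖ ^ 2)) =ᶠ[𝓝 x]
      (fun y => φ' (‖y - a‖ ^ 2)) • fun y => L (y - a) := by
    filter_upwards [(hq x).continuousAt.eventually hφ] with y hy
    exact (hy.comp_hasFDerivAt y (hq y)).fderiv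
  have hD2f : HasFDerivAt ((fun y => φ' (‖y - a‖ ^ 2)) • fun y => L (y - a)) _ x :=
    (hφ'.comp_hasFDerivAt x (hq x)).smul (L.hasFDerivAt.comp x ((hasFDerivAt_id x).sub_const a))
  have hD2f_apply : ∀ v, fderiv ℝ ((fun y => φ' (‖y - a‖ ^ 2)) • fun y => L (y - a)) x v v =
      2 * φ' (‖x - a‖ ^ 2) * ‖v‖ ^ 2 + 4 * φ'' * ⟪x - a, v⟫ ^ 2 := by
    intro v
    rw [hD2f.fderiv]
    simp only [Function.comp_apply, ContinuousLinearMap.comp_id, add_apply, smul_apply,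
      ContinuousLinearMap.smulRight_apply, innerSL_apply_apply ℝ, real_inner_self_eq_norm_sq,
      smul_eq_mul, L]
    ring
  set b := stdOrthonormalBasis ℝ E
  rw [laplacian_eq_iteratedFDeriv_orthonormalBasis _ b]
  simp only [iteratedFDeriv_two_apply, Matrix.cons_val_zero, Matrix.cons_val_one,
    Matrix.cons_val_fin_one, hDf.fderiv_eq, hD2f_apply, b.orthonormal.1, one_pow, mul_one,
    Finset.sum_add_distrib, Finset.sum_const, Finset.card_univ, Fintype.card_fin, nsmul_eq_mul,
    ← Finset.mul_sum, b.sum_sq_inner_left]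
  ring

section Laplacian

variable {E F : Type*} [NormedAddCommGroup E] [InnerProductSpace ℝ E] [FiniteDimensional ℝ E]
  [NormedAddCommGroup F] [NormedSpace ℝ F]

theorem laplacian_eq_sum_fderiv_fderiv {f : E → F} {x : E} (hf : ContDiffAt ℝ 2 f x)
    {ι : Type*} [Fintype ι] (v : OrthonormalBasis ι ℝ E) :
    Δ f x = ∑ i, fderiv ℝ (fun y => fderiv ℝ f y (v i)) x (v i) := by
  have hDf : DifferentiableAt ℝ (fderiv ℝ f) x :=
    (hf.fderiv_right (m := 1) le_rfl).differentiableAt one_ne_zero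
  rw [laplacian_eq_iteratedFDeriv_orthonormalBasis f v]
  simp [iteratedFDeriv_two_apply, fderiv_clm_apply hDf (differentiableAt_const (v _))]

theorem laplacian_sum {ι : Type*} (s : Finset ι) {f : ι → E → F} {x : E}
    (hf : ∀ i ∈ s, ContDiffAt ℝ 2 (f i) x) :
    Δ (fun y => ∑ i ∈ s, f i y) x = ∑ i ∈ s, Δ (f i) x := by
  classical
  induction s using Finset.induction_on with
  | empty => simp
  | insert j s hj ih =>
    rw [Finset.forall_mem_insert] at hf
    simp only [Finset.sum_insert hj]
    rw [← ih hf.2]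
    exact hf.1.laplacian_add (ContDiffAt.sum hf.2)

end Laplacian

section Yukawa

open Real

/-- The Yukawa potential `e^{-c r} / r` as a function of `t = r²`, so that
`y ↦ yukawaProfile c (‖y - a‖²)` is smooth away from `a`. -/
noncomputable def yukawaProfile (c t : ℝ) : ℝ := exp (-c * √t) / √t

noncomputable def yukawaProfile' (c t : ℝ) : ℝ := -((c * √t + 1) * exp (-c * √t)) / (2 * √t ^ 3)

noncomputable def yukawaProfile'' (c t : ℝ) : ℝ :=
  (c ^ 2 * √t ^ 2 + 3 * (c * √t + 1)) * exp (-c * √t) / (4 * √t ^ 5)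

variable {c t : ℝ}

theorem yukawaProfile_sq {r : ℝ} (hr : 0 ≤ r) : yukawaProfile c (r ^ 2) = exp (-c * r) / r := by
  rw [yukawaProfile, sqrt_sq hr]

theorem hasDerivAt_exp_neg_mul_sqrt (c : ℝ) (ht : 0 < t) :
    HasDerivAt (fun t => exp (-c * √t)) (exp (-c * √t) * (-c * (1 / (2 * √t)))) t :=
  ((hasDerivAt_sqrt ht.ne').const_mul (-c)).exp

theorem hasDerivAt_yukawaProfile (ht : 0 < t) :
    HasDerivAt (yukawaProfile c) (yukawaProfile' c t) t := by
  refine ((hasDerivAt_exp_neg_mul_sqrt c ht).fun_div (hasDerivAt_sqrt ht.ne')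
    (sqrt_pos.2 ht).ne').congr_deriv ?_
  obtain ⟨s, hs, rfl⟩ : ∃ s, 0 < s ∧ t = s ^ 2 := ⟨√t, sqrt_pos.2 ht, (sq_sqrt ht.le).symm⟩
  rw [yukawaProfile', sqrt_sq hs.le]
  field_simp
  ring

theorem hasDerivAt_yukawaProfile' (ht : 0 < t) :
    HasDerivAt (yukawaProfile' c) (yukawaProfile'' c t) t := by
  have hsqrt := hasDerivAt_sqrt ht.ne'
  have hnum :=
    (((hsqrt.const_mul c).add_const 1).fun_mul (hasDerivAt_exp_neg_mul_sqrt c ht)).fun_neg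
  have hden := (hsqrt.fun_pow 3).const_mul (2 : ℝ)
  have hsqrt_pos : 0 < √t := sqrt_pos.2 ht
  refine (hnum.fun_div hden (by positivity)).congr_deriv ?_
  obtain ⟨s, hs, rfl⟩ : ∃ s, 0 < s ∧ t = s ^ 2 := ⟨√t, hsqrt_pos, (sq_sqrt ht.le).symm⟩
  rw [yukawaProfile'', sqrt_sq hs.le]
  field_simp
  ring

theorem yukawaProfile_ode (ht : 0 < t) :
    4 * t * yukawaProfile'' c t + 6 * yukawaProfile' c t = c ^ 2 * yukawaProfile c t := by
  obtain ⟨s, hs, rfl⟩ : ∃ s, 0 < s ∧ t = s ^ 2 := ⟨√t, sqrt_pos.2 ht, (sq_sqrt ht.le).symm⟩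
  rw [yukawaProfile, yukawaProfile', yukawaProfile'', sqrt_sq hs.le]
  field_simp
  ring

theorem contDiffAt_yukawaProfile {n : WithTop ℕ∞} (ht : 0 < t) :
    ContDiffAt ℝ n (yukawaProfile c) t := by
  have hsqrt : ContDiffAt ℝ n (√·) t := contDiffAt_sqrt ht.ne'
  exact ((contDiffAt_const.mul hsqrt).exp).div hsqrt (sqrt_pos.2 ht).ne'

variable {E : Type*} [NormedAddCommGroup E] [InnerProductSpace ℝ E] {a x : E}

theorem contDiffAt_yukawaProfile_norm_sub_sq {n : WithTop ℕ∞} (c : ℝ) (hx : x ≠ a) :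
    ContDiffAt ℝ n (fun y => yukawaProfile c (‖y - a‖ ^ 2)) x :=
  (contDiffAt_yukawaProfile (pow_pos (norm_pos_iff.2 (sub_ne_zero.2 hx)) 2)).comp x
    ((contDiff_id.sub contDiff_const).norm_sq ℝ).contDiffAt

theorem laplacian_yukawaProfile_norm_sub_sq [FiniteDimensional ℝ E]
    (hE : Module.finrank ℝ E = 3) (c : ℝ) (hx : x ≠ a) :
    Δ (fun y => yukawaProfile c (‖y - a‖ ^ 2)) x = c ^ 2 * yukawaProfile c (‖x - a‖ ^ 2) := by
  have ht : 0 < ‖x - a‖ ^ 2 := pow_pos (norm_pos_iff.2 (sub_ne_zero.2 hx)) 2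
  rw [laplacian_comp_norm_sub_sq
    ((eventually_gt_nhds ht).mono fun t ht => hasDerivAt_yukawaProfile ht)
    (hasDerivAt_yukawaProfile' ht), hE, ← yukawaProfile_ode ht]
  ring

variable {ι : Type*} (s : Finset ι) (C : ι → ℝ) {a : ι → E}

theorem contDiffAt_sum_yukawaProfile {n : WithTop ℕ∞} (c : ℝ) (hx : ∀ i ∈ s, x ≠ a i) :
    ContDiffAt ℝ n (fun y => ∑ i ∈ s, C i * yukawaProfile c (‖y - a i‖ ^ 2)) x :=
  ContDiffAt.sum fun i hi => contDiffAt_const.mul (contDiffAt_yukawaProfile_norm_sub_sq c (hx i hi))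

theorem laplacian_sum_yukawaProfile [FiniteDimensional ℝ E] (hE : Module.finrank ℝ E = 3)
    (c : ℝ) (hx : ∀ i ∈ s, x ≠ a i) :
    Δ (fun y => ∑ i ∈ s, C i * yukawaProfile c (‖y - a i‖ ^ 2)) x =
      c ^ 2 * ∑ i ∈ s, C i * yukawaProfile c (‖x - a i‖ ^ 2) := by
  have hterm : ∀ i ∈ s, ContDiffAt ℝ 2 (fun y => yukawaProfile c (‖y - a i‖ ^ 2)) x :=
    fun i hi => contDiffAt_yukawaProfile_norm_sub_sq c (hx i hi)
  rw [laplacian_sum s fun i hi => contDiffAt_const.mul (hterm i hi), Finset.mul_sum]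
  refine Finset.sum_congr rfl fun i hi => ?_
  change Δ (C i • fun y => yukawaProfile c (‖y - a i‖ ^ 2)) x = _
  rw [laplacian_smul _ (hterm i hi),
    laplacian_yukawaProfile_norm_sub_sq hE c (hx i hi), smul_eq_mul]
  ring

end Yukawa

theorem boundary_function_solves_linearized_PBE_general
    (m : ℕ) (xs : Fin m → EuclideanSpace ℝ (Fin 3)) (Q : Fin m → ℝ)
    (εs κs α : ℝ) (hεs : 0 < εs)
    (x : EuclideanSpace ℝ (Fin 3)) (hx : ∀ i, x ≠ xs i) :
    ContDiffAt ℝ 2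
      (fun y : EuclideanSpace ℝ (Fin 3) =>
        α * ∑ i, Q i / (εs * ‖y - xs i‖) *
          Real.exp (-κs * ‖y - xs i‖ / Real.sqrt εs)) x ∧
    -εs * (∑ j : Fin 3,
      fderiv ℝ
        (fun y : EuclideanSpace ℝ (Fin 3) =>
          fderiv ℝ
            (fun z : EuclideanSpace ℝ (Fin 3) =>
              α * ∑ i, Q i / (εs * ‖z - xs i‖) *
                Real.exp (-κs * ‖z - xs i‖ / Real.sqrt εs)) y
            (EuclideanSpace.single j (1 : ℝ)))
        x (EuclideanSpace.single j (1 : ℝ)))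
      + κs ^ 2 *
        (α * ∑ i, Q i / (εs * ‖x - xs i‖) *
          Real.exp (-κs * ‖x - xs i‖ / Real.sqrt εs)) = 0 := by
  set c := κs / √εs
  set g : EuclideanSpace ℝ (Fin 3) → ℝ :=
    fun y => ∑ i, α * Q i / εs * yukawaProfile c (‖y - xs i‖ ^ 2)
  -- this holds at the charges too, where both sides carry the junk value `r / 0 = 0`
  have hg : (fun y : EuclideanSpace ℝ (Fin 3) =>
      α * ∑ i, Q i / (εs * ‖y - xs i‖) * Real.exp (-κs * ‖y - xs i‖ / Real.sqrt εs)) = g := by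
    have hexp : ∀ r, -κs * r / √εs = -c * r := fun r => by ring
    funext y
    simp only [g, Finset.mul_sum, yukawaProfile_sq (norm_nonneg _), hexp]
    congr! 1
    ring
  have hcd : ContDiffAt ℝ 2 g x := contDiffAt_sum_yukawaProfile _ _ c fun i _ => hx i
  have hΔ : Δ g x = c ^ 2 * g x :=
    laplacian_sum_yukawaProfile _ _ finrank_euclideanSpace_fin c fun i _ => hx i
  have hc : εs * c ^ 2 = κs ^ 2 := by
    rw [div_pow, Real.sq_sqrt hεs.le]
    field_simp
  have hbasis := laplacian_eq_sum_fderiv_fderiv hcd (EuclideanSpace.basisFun (Fin 3) ℝ)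
  simp only [EuclideanSpace.basisFun_apply] at hbasis
  rw [hg, congrFun hg x, ← hbasis, hΔ]
  exact ⟨hcd, by linear_combination (-g x) * hc⟩

/-- The boundary function
`g (y) = α * ∑ i, (Q i / (ε_s * ‖y - x i‖)) * exp (-κ̄_s * ‖y - x i‖ / √ε_s)`
solves the linearized PBE `-ε_s Δ g + κ̄_s² g = 0` in the solvent away from the charges. -/
theorem boundary_function_solves_linearized_PBE
    (m : ℕ) (xs : Fin m → EuclideanSpace ℝ (Fin 3)) (Q : Fin m → ℝ)
    (εs κs α : ℝ) (hεs : 0 < εs) (hκs : 0 ≤ κs) (hα : 0 < α)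
    (x : EuclideanSpace ℝ (Fin 3)) (hx : ∀ i, x ≠ xs i) :
    ContDiffAt ℝ 2
      (fun y : EuclideanSpace ℝ (Fin 3) =>
        α * ∑ i, Q i / (εs * ‖y - xs i‖) *
          Real.exp (-κs * ‖y - xs i‖ / Real.sqrt εs)) x ∧
    -εs * (∑ j : Fin 3,
      fderiv ℝ
        (fun y : EuclideanSpace ℝ (Fin 3) =>
          fderiv ℝ
            (fun z : EuclideanSpace ℝ (Fin 3) =>
              α * ∑ i, Q i / (εs * ‖z - xs i‖) *
                Real.exp (-κs * ‖z - xs i‖ / Real.sqrt εs)) y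
            (EuclideanSpace.single j (1 : ℝ)))
        x (EuclideanSpace.single j (1 : ℝ)))
      + κs ^ 2 *
        (α * ∑ i, Q i / (εs * ‖x - xs i‖) *
          Real.exp (-κs * ‖x - xs i‖ / Real.sqrt εs)) = 0 :=
  boundary_function_solves_linearized_PBE_general m xs Q εs κs α hεs x hx
end
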